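/- arXiv:1905.00177 — 2 statements merged into one kernel-verified Lean document; each statement's English description precedes it below -/
import Mathlib

section
/- Let V and R be as in the context, with V ≤ R ≤ J almost surely and P(R ≥ 1) > 0. Then pFDR ≥ (1/J)·FWE₁, i.e. E[(V/R)·1{R ≥ 1}] / P(R ≥ 1) ≥ (1/J)·P(V ≥ 1). -/
open MeasureTheory

/-!
On `{V ≥ 1}` we have `1 ≤ V ≤ R ≤ J`, so `V / R ≥ 1 / R ≥ 1 / J`; integrating this pointwise bound
gives `FDR := E[(V / R) · 1{R ≥ 1}] ≥ FWE₁ / J`, and `pFDR = FDR / P(R ≥ 1) ≥ FDR` since `P(R ≥ 1) ≤ 1`.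
-/

section FalseDiscoveryProportion

variable {Ω : Type*} (V R : Ω → ℕ)

noncomputable def falseDiscoveryProportion (ω : Ω) : ℝ :=
  if 1 ≤ R ω then (V ω : ℝ) / (R ω : ℝ) else 0

variable {V R}

lemma falseDiscoveryProportion_nonneg (ω : Ω) : 0 ≤ falseDiscoveryProportion V R ω := by
  unfold falseDiscoveryProportion
  split_ifs <;> positivity

lemma falseDiscoveryProportion_le_one {ω : Ω} (hVR : V ω ≤ R ω) :
    falseDiscoveryProportion V R ω ≤ 1 := by
  unfold falseDiscoveryProportion
  split_ifs
  · exact div_le_one_of_le₀ (by exact_mod_cast hVR) (by positivity)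
  · exact zero_le_one

lemma indicator_le_falseDiscoveryProportion {J : ℕ} {ω : Ω} (hVR : V ω ≤ R ω) (hRJ : R ω ≤ J) :
    {ω | 1 ≤ V ω}.indicator (fun _ => 1 / (J : ℝ)) ω ≤ falseDiscoveryProportion V R ω := by
  by_cases hV : 1 ≤ V ω
  · have hR : 1 ≤ R ω := hV.trans hVR
    rw [Set.indicator_of_mem (show ω ∈ {ω | 1 ≤ V ω} from hV), falseDiscoveryProportion, if_pos hR]
    calc 1 / (J : ℝ) ≤ 1 / (R ω : ℝ) :=
          one_div_le_one_div_of_le (by exact_mod_cast hR) (by exact_mod_cast hRJ)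
      _ ≤ (V ω : ℝ) / (R ω : ℝ) := by gcongr; exact_mod_cast hV
  · rw [Set.indicator_of_notMem (show ω ∉ {ω | 1 ≤ V ω} from hV)]
    exact falseDiscoveryProportion_nonneg ω

variable [MeasurableSpace Ω] {μ : Measure Ω}

lemma integrable_falseDiscoveryProportion [IsFiniteMeasure μ] (hV : Measurable V)
    (hR : Measurable R) (hVR : ∀ᵐ ω ∂μ, V ω ≤ R ω) :
    Integrable (falseDiscoveryProportion V R) μ := by
  have hmeas : Measurable (falseDiscoveryProportion V R) :=
    Measurable.ite (hR measurableSet_Ici)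
      ((measurable_from_nat.comp hV).div (measurable_from_nat.comp hR)) measurable_const
  refine Integrable.mono' (integrable_const 1) hmeas.aestronglyMeasurable ?_
  filter_upwards [hVR] with ω hω
  rw [Real.norm_of_nonneg (falseDiscoveryProportion_nonneg ω)]
  exact falseDiscoveryProportion_le_one hω

lemma div_measureReal_le_integral_falseDiscoveryProportion [IsFiniteMeasure μ] {J : ℕ}
    (hV : Measurable V) (hR : Measurable R) (hVR : ∀ᵐ ω ∂μ, V ω ≤ R ω)
    (hRJ : ∀ᵐ ω ∂μ, R ω ≤ J) :
    1 / (J : ℝ) * μ.real {ω | 1 ≤ V ω} ≤ ∫ ω, falseDiscoveryProportion V R ω ∂μ := by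
  have hset : MeasurableSet {ω | 1 ≤ V ω} := hV measurableSet_Ici
  calc 1 / (J : ℝ) * μ.real {ω | 1 ≤ V ω}
      = ∫ ω, {ω | 1 ≤ V ω}.indicator (fun _ => 1 / (J : ℝ)) ω ∂μ := by
        rw [integral_indicator_const _ hset, smul_eq_mul, mul_comm]
    _ ≤ ∫ ω, falseDiscoveryProportion V R ω ∂μ := by
        refine integral_mono_ae ((integrable_const _).indicator hset)
          (integrable_falseDiscoveryProportion hV hR hVR) ?_
        filter_upwards [hVR, hRJ] with ω hvr hrj
        exact indicator_le_falseDiscoveryProportion hvr hrj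

end FalseDiscoveryProportion

theorem stmt6_general {Ω : Type*} [MeasurableSpace Ω] (P : Measure Ω) [IsProbabilityMeasure P]
    (J : ℕ) (V R : Ω → ℕ) (hV : Measurable V) (hR : Measurable R)
    (hVR : ∀ᵐ ω ∂P, V ω ≤ R ω) (hRJ : ∀ᵐ ω ∂P, R ω ≤ J) (hpos : 0 < P {ω | 1 ≤ R ω}) :
    (1 / (J : ℝ)) * (P {ω | 1 ≤ V ω}).toReal
      ≤ (∫ ω, (if 1 ≤ R ω then (V ω : ℝ) / (R ω : ℝ) else 0) ∂P)
          / (P {ω | 1 ≤ R ω}).toReal := by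
  have hRpos : 0 < P.real {ω | 1 ≤ R ω} := ENNReal.toReal_pos hpos.ne' (measure_ne_top P _)
  calc 1 / (J : ℝ) * P.real {ω | 1 ≤ V ω}
      ≤ ∫ ω, falseDiscoveryProportion V R ω ∂P :=
        div_measureReal_le_integral_falseDiscoveryProportion hV hR hVR hRJ
    _ ≤ (∫ ω, falseDiscoveryProportion V R ω ∂P) / P.real {ω | 1 ≤ R ω} :=
        le_div_self (integral_nonneg falseDiscoveryProportion_nonneg) hRpos measureReal_le_one

/-- pFDR ≥ (1/J)·FWE₁:
`E[(V/R)·1{R ≥ 1}] / P(R ≥ 1) ≥ (1/J)·P(V ≥ 1)` when `V ≤ R ≤ J` a.s. and `P(R ≥ 1) > 0`. -/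
theorem stmt6 {Ω : Type*} [MeasurableSpace Ω] (P : Measure Ω) [IsProbabilityMeasure P]
    (J : ℕ) (hJ : 1 ≤ J) (V R : Ω → ℕ) (hV : Measurable V) (hR : Measurable R)
    (hVR : ∀ᵐ ω ∂P, V ω ≤ R ω) (hRJ : ∀ᵐ ω ∂P, R ω ≤ J) (hpos : 0 < P {ω | 1 ≤ R ω}) :
    (1 / (J : ℝ)) * (P {ω | 1 ≤ V ω}).toReal
      ≤ (∫ ω, (if 1 ≤ R ω then (V ω : ℝ) / (R ω : ℝ) else 0) ∂P)
          / (P {ω | 1 ≤ R ω}).toReal :=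
  stmt6_general P J V R hV hR hVR hRJ hpos
end

section
/- Fix integers 0 ≤ ℓ < u ≤ J and α, β ∈ (0,1), and set the thresholds a = |log β| + log J, b = |log α| + log J, c = |log α| + log((J−ℓ)J), d = |log β| + log(uJ). Then for every signal set A ⊆ {1,…,J} with ℓ ≤ |A| ≤ u, the gap-intersection rule with these thresholds terminates P_A-almost surely and satisfies FDR_A ≤ α and FNR_A ≤ β; that is, the gap-intersection rule with these thresholds is admissible for FDR/FNR control over the class of signal sets A with ℓ ≤ |A| ≤ u. -/
/-!
Every error of the gap-intersection rule is witnessed by a log-likelihood ratio that crosses a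
threshold in the wrong direction: a false discovery forces a null statistic `λʲ ≥ b` or a gap
`λʲ - λⁱ ≥ c` between a null `j` and a signal `i`, and a missed signal forces a signal statistic
`λⁱ ≤ -a` or such a gap `≥ d`. A change of measure at the first crossing time (Ville's
inequality) bounds the probability that a log-likelihood ratio ever reaches `t` by `exp (-t)`;
the gap `λʲ - λⁱ` is itself the log-likelihood ratio of `P₁ʲ ⊗ P₀ⁱ` against `P₀ʲ ⊗ P₁ⁱ`. A union
bound over the `J - |A|` nulls, the `|A|` signals and the `(J - |A|) |A|` pairs, with the chosen
thresholds, gives `α` and `β`. The rule stops almost surely because eventually every signal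
statistic is above `b` and every null statistic below `-a`, and then `τ₂` fires.
-/

open Filter MeasureTheory ProbabilityTheory

/-- The log-likelihood ratio at time `n` of a stream: the log of the Radon–Nikodym
derivative of the law of the first `n` observations under `P1` with respect to that
under `P0`, evaluated at the observed stream `x`. -/
noncomputable def llr {E : Type*} [MeasurableSpace E] (P0 P1 : Measure (ℕ → E)) (n : ℕ)
    (x : ℕ → E) : ℝ :=
  Real.log (((P1.map fun y (i : Fin n) => y i).rnDeriv (P0.map fun y (i : Fin n) => y i)
      fun i : Fin n => x i).toReal)

/-- `orderStat x k` is the `k`-th largest (1-indexed) of the values `x j`, `j ∈ Fin J`. -/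
noncomputable def orderStat {J : ℕ} (x : Fin J → ℝ) (k : ℕ) : ℝ :=
  ((Multiset.ofList (List.ofFn x)).sort (· ≤ ·)).getD (J - k) 0

/-- The set of the `m` indices `j` with the largest values `x j`, ties broken in favor of
the smallest index. -/
noncomputable def topM {J : ℕ} (x : Fin J → ℝ) (m : ℕ) : Finset (Fin J) :=
  ((@List.insertionSort (Fin J) (fun j k => x k < x j ∨ (x j = x k ∧ j ≤ k))
      (Classical.decRel _) (List.finRange J)).take m).toFinset

/-- `pcount x` is the number of indices `j` with `x j > 0`. -/
noncomputable def pcount {J : ℕ} (x : Fin J → ℝ) : ℕ :=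
  (Finset.univ.filter fun j => 0 < x j).card

/-- The stopping condition of the gap-intersection rule at a fixed time, for the values
`x : Fin J → ℝ` of the log-likelihood ratio statistics: the disjunction of the stopping
criteria of `τ₁`, `τ₂` and `τ₃`.  The conventions `λ⁽⁰⁾ = +∞` and `λ⁽ᴶ⁺¹⁾ = −∞` are
encoded by the disjuncts `l = 0` and `u = J` (the gap conditions involving them hold
automatically). -/
noncomputable def giCond {J : ℕ} (x : Fin J → ℝ) (l u : ℕ) (a b c d : ℝ) : Prop :=
  (orderStat x (l + 1) ≤ -a ∧ (l = 0 ∨ c ≤ orderStat x l - orderStat x (l + 1))) ∨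
  (l ≤ pcount x ∧ pcount x ≤ u ∧ ∀ j, x j ∉ Set.Ioo (-a) b) ∨
  (b ≤ orderStat x u ∧ (u = J ∨ d ≤ orderStat x u - orderStat x (u + 1)))

/-- The gap-intersection stopping time `T_GI = min(τ₁, τ₂, τ₃)`
(`= 0`, the infimum of the empty set of naturals, if the rule never stops). -/
noncomputable def giT {J : ℕ} (lam : Fin J → ℕ → ℝ) (l u : ℕ) (a b c d : ℝ) : ℕ :=
  sInf {n | 1 ≤ n ∧ giCond (fun j => lam j n) l u a b c d}

/-- The number `p′ = max(ℓ, min(u, p(T_GI)))` of null hypotheses rejected by the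
gap-intersection rule. -/
noncomputable def giR {J : ℕ} (lam : Fin J → ℕ → ℝ) (l u : ℕ) (a b c d : ℝ) : ℕ :=
  max l (min u (pcount fun j => lam j (giT lam l u a b c d)))

/-- The rejection set of the gap-intersection rule: the `p′` indices with the largest
log-likelihood ratios at time `T_GI`, ties broken in favor of the smallest index. -/
noncomputable def giD {J : ℕ} (lam : Fin J → ℕ → ℝ) (l u : ℕ) (a b c d : ℝ) :
    Finset (Fin J) :=
  topM (fun j => lam j (giT lam l u a b c d)) (giR lam l u a b c d)

theorem Finset.exists_mem_notMem_of_card_le {α : Type*} {s t : Finset α} (h : s.card ≤ t.card)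
    {a : α} (has : a ∈ s) (hat : a ∉ t) : ∃ b ∈ t, b ∉ s := by
  by_contra! hts
  rw [← Finset.eq_of_subset_of_card_le hts h] at has
  exact hat has

section Ranking

variable {J : ℕ} (x : Fin J → ℝ)

noncomputable def rankList : List (Fin J) :=
  @List.insertionSort (Fin J) (fun j k => x k < x j ∨ (x j = x k ∧ j ≤ k))
    (Classical.decRel _) (List.finRange J)

theorem topM_eq_toFinset_take (m : ℕ) : topM x m = ((rankList x).take m).toFinset := rfl

theorem rankList_perm : (rankList x).Perm (List.finRange J) :=
  @List.perm_insertionSort _ _ (Classical.decRel _) _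

theorem length_rankList : (rankList x).length = J := by
  simpa using (rankList_perm x).length_eq

theorem nodup_rankList : (rankList x).Nodup :=
  (rankList_perm x).nodup_iff.2 (List.nodup_finRange J)

theorem mem_rankList (j : Fin J) : j ∈ rankList x :=
  (rankList_perm x).mem_iff.2 (List.mem_finRange j)

theorem pairwise_rankList :
    (rankList x).Pairwise fun j k => x k < x j ∨ (x j = x k ∧ j ≤ k) := by
  have htotal : Std.Total fun j k : Fin J => x k < x j ∨ (x j = x k ∧ j ≤ k) := ⟨fun j k => by
    rcases lt_trichotomy (x j) (x k) with h | h | h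
    · exact .inr (.inl h)
    · exact (le_total j k).imp (fun hjk => .inr ⟨h, hjk⟩) (fun hkj => .inr ⟨h.symm, hkj⟩)
    · exact .inl (.inl h)⟩
  have htrans : IsTrans (Fin J) fun j k => x k < x j ∨ (x j = x k ∧ j ≤ k) := ⟨by
    rintro j k m (h1 | ⟨h1, h1'⟩) (h2 | ⟨h2, h2'⟩)
    · exact .inl (h2.trans h1)
    · exact .inl (h2 ▸ h1)
    · exact .inl (h1 ▸ h2)
    · exact .inr ⟨h1.trans h2, h1'.trans h2'⟩⟩
  exact @List.pairwise_insertionSort _ _ (Classical.decRel _) htotal htrans _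

theorem rankList_getElem_antitone {i i' : ℕ} (h : i ≤ i') (hi' : i' < (rankList x).length) :
    x (rankList x)[i'] ≤ x (rankList x)[i] := by
  rcases h.eq_or_lt with rfl | hlt
  · exact le_rfl
  · rcases List.pairwise_iff_getElem.1 (pairwise_rankList x) i i' (hlt.trans hi') hi' hlt with
      h | ⟨h, _⟩
    exacts [h.le, h.ge]

theorem le_of_idxOf_le {j k : Fin J} (h : (rankList x).idxOf j ≤ (rankList x).idxOf k) :
    x k ≤ x j := by
  have hk := List.idxOf_lt_length_of_mem (mem_rankList x k)
  simpa only [List.getElem_idxOf] using rankList_getElem_antitone x h hk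

theorem mem_topM_iff {m : ℕ} {j : Fin J} : j ∈ topM x m ↔ (rankList x).idxOf j < m := by
  rw [topM_eq_toFinset_take, List.mem_toFinset, List.mem_take_iff_idxOf_lt (mem_rankList x j)]

theorem card_topM (m : ℕ) : (topM x m).card = min m J := by
  rw [topM_eq_toFinset_take, List.toFinset_card_of_nodup ((nodup_rankList x).sublist
    (List.take_sublist _ _)), List.length_take, length_rankList]

theorem orderStat_eq_getElem {k : ℕ} (hk : 1 ≤ k) (hkJ : k ≤ J) :
    orderStat x k = x ((rankList x)[k - 1]'(by rw [length_rankList]; omega)) := by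
  have hsorted : (((rankList x).map x).reverse).Pairwise (· ≤ ·) := by
    rw [List.pairwise_reverse]
    exact (pairwise_rankList x).map x fun j k h => h.elim le_of_lt fun h => h.1.ge
  have hsort : (Multiset.ofList (List.ofFn x)).sort (· ≤ ·) = ((rankList x).map x).reverse := by
    refine List.Perm.eq_of_pairwise' (Multiset.pairwise_sort _ _) hsorted ?_
    refine (Quotient.exact (Multiset.sort_eq (Multiset.ofList (List.ofFn x)) (· ≤ ·))).trans ?_
    rw [List.ofFn_eq_map]
    exact ((List.reverse_perm _).trans ((rankList_perm x).map x)).symm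
  have hlen : ((rankList x).map x).reverse.length = J := by simp [length_rankList]
  rw [orderStat, hsort, List.getD_eq_getElem _ _ (by omega), List.getElem_reverse,
    List.getElem_map]
  congr 2
  simp only [List.length_map, length_rankList]
  omega

theorem orderStat_le_of_mem_topM {m : ℕ} (hm : 1 ≤ m) (hmJ : m ≤ J) {j : Fin J}
    (hj : j ∈ topM x m) : orderStat x m ≤ x j := by
  rw [orderStat_eq_getElem x hm hmJ]
  refine le_of_idxOf_le x ?_
  rw [List.Nodup.idxOf_getElem (nodup_rankList x)]
  exact Nat.le_sub_one_of_lt ((mem_topM_iff x).1 hj)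

theorem le_orderStat_succ_of_notMem_topM {m : ℕ} (hmJ : m < J) {j : Fin J}
    (hj : j ∉ topM x m) : x j ≤ orderStat x (m + 1) := by
  rw [orderStat_eq_getElem x (by omega) hmJ]
  refine le_of_idxOf_le x ?_
  rw [List.Nodup.idxOf_getElem (nodup_rankList x)]
  simpa [mem_topM_iff] using hj

theorem le_of_mem_topM_of_notMem {m : ℕ} {j k : Fin J} (hj : j ∈ topM x m)
    (hk : k ∉ topM x m) : x k ≤ x j :=
  le_of_idxOf_le x (((mem_topM_iff x).1 hj).le.trans (not_lt.1 ((mem_topM_iff x).not.1 hk)))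

end Ranking

section StoppingRule

variable {J : ℕ} (x : Fin J → ℝ)

theorem pcount_le : pcount x ≤ J :=
  (Finset.card_filter_le _ _).trans_eq (Finset.card_fin J)

theorem pcount_le_of_orderStat_succ_nonpos {m : ℕ} (hmJ : m < J)
    (h : orderStat x (m + 1) ≤ 0) : pcount x ≤ m := by
  have hsub : Finset.univ.filter (fun j => 0 < x j) ⊆ topM x m := fun j hj => by
    by_contra hjm
    linarith [le_orderStat_succ_of_notMem_topM x hmJ hjm, (Finset.mem_filter.1 hj).2]
  have := Finset.card_le_card hsub
  rw [card_topM] at this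
  exact this.trans (min_le_left _ _)

theorem le_pcount_of_orderStat_pos {m : ℕ} (hm : 1 ≤ m) (hmJ : m ≤ J)
    (h : 0 < orderStat x m) : m ≤ pcount x := by
  have hsub : topM x m ⊆ Finset.univ.filter (fun j => 0 < x j) := fun j hj =>
    Finset.mem_filter.2 ⟨Finset.mem_univ j, h.trans_le (orderStat_le_of_mem_topM x hm hmJ hj)⟩
  have := Finset.card_le_card hsub
  rwa [card_topM, min_eq_left hmJ] at this

theorem topM_pcount : topM x (pcount x) = Finset.univ.filter fun j => 0 < x j := by
  have hcard : (topM x (pcount x)).card = pcount x := by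
    rw [card_topM, min_eq_left (pcount_le x)]
  have hsub : Finset.univ.filter (fun j => 0 < x j) ⊆ topM x (pcount x) := fun k hk => by
    by_contra hkT
    have hsub' : topM x (pcount x) ⊆ Finset.univ.filter fun j => 0 < x j := fun j hj =>
      Finset.mem_filter.2 ⟨Finset.mem_univ j,
        (Finset.mem_filter.1 hk).2.trans_le (le_of_mem_topM_of_notMem x hj hkT)⟩
    exact hkT (Finset.eq_of_subset_of_card_le hsub' hcard.ge ▸ hk)
  exact (Finset.eq_of_subset_of_card_le hsub hcard.le).symm

variable {l u : ℕ} {a b c d : ℝ} {A : Finset (Fin J)}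

theorem exists_of_mem_topM_of_giCond (hcond : giCond x l u a b c d) (ha : 0 ≤ a) (hb : 0 < b)
    (hlu : l < u) (huJ : u ≤ J) (hAl : l ≤ A.card) {j : Fin J}
    (hj : j ∈ topM x (max l (min u (pcount x)))) (hjA : j ∈ Aᶜ) :
    (∃ j ∈ Aᶜ, b ≤ x j) ∨ ∃ j ∈ Aᶜ, ∃ i ∈ A, c ≤ x j - x i := by
  rcases hcond with ⟨hlow, hgap⟩ | ⟨hpl, hpu, hout⟩ | ⟨hhigh, -⟩
  · have hp := pcount_le_of_orderStat_succ_nonpos x (m := l) (by omega) (by linarith)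
    rw [show max l (min u (pcount x)) = l by omega] at hj
    have hl : l ≠ 0 := by
      rintro rfl
      have := Finset.card_pos.2 ⟨j, hj⟩
      rw [card_topM] at this
      omega
    obtain ⟨i, hiA, hiT⟩ := Finset.exists_mem_notMem_of_card_le
      (by rw [card_topM]; omega) hj (Finset.mem_compl.1 hjA)
    have hj' := orderStat_le_of_mem_topM x (Nat.one_le_iff_ne_zero.2 hl) (by omega) hj
    have hi' := le_orderStat_succ_of_notMem_topM x (by omega) hiT
    exact .inr ⟨j, hjA, i, hiA, by linarith [hgap.resolve_left hl]⟩
  · rw [show max l (min u (pcount x)) = pcount x by omega, topM_pcount, Finset.mem_filter] at hj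
    have hjb := hout j
    simp only [Set.mem_Ioo, not_and, not_lt] at hjb
    exact .inl ⟨j, hjA, hjb (by linarith [hj.2])⟩
  · have hp := le_pcount_of_orderStat_pos x (by omega) huJ (hb.trans_le hhigh)
    rw [show max l (min u (pcount x)) = u by omega] at hj
    exact .inl ⟨j, hjA, hhigh.trans (orderStat_le_of_mem_topM x (by omega) huJ hj)⟩

theorem exists_of_notMem_topM_of_giCond (hcond : giCond x l u a b c d) (ha : 0 ≤ a) (hb : 0 < b)
    (hlu : l < u) (huJ : u ≤ J) (hAu : A.card ≤ u) {i : Fin J}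
    (hi : i ∉ topM x (max l (min u (pcount x)))) (hiA : i ∈ A) :
    (∃ i ∈ A, x i ≤ -a) ∨ ∃ j ∈ Aᶜ, ∃ i ∈ A, d ≤ x j - x i := by
  rcases hcond with ⟨hlow, -⟩ | ⟨hpl, hpu, hout⟩ | ⟨hhigh, hgap⟩
  · have hp := pcount_le_of_orderStat_succ_nonpos x (m := l) (by omega) (by linarith)
    rw [show max l (min u (pcount x)) = l by omega] at hi
    exact .inl ⟨i, hiA, (le_orderStat_succ_of_notMem_topM x (by omega) hi).trans hlow⟩
  · rw [show max l (min u (pcount x)) = pcount x by omega, topM_pcount, Finset.mem_filter] at hi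
    have hia := hout i
    simp only [Set.mem_Ioo, not_and, not_lt] at hia
    exact .inl ⟨i, hiA, by_contra fun h => hi ⟨Finset.mem_univ i,
      hb.trans_le (hia (lt_of_not_ge h))⟩⟩
  · have hp := le_pcount_of_orderStat_pos x (by omega) huJ (hb.trans_le hhigh)
    rw [show max l (min u (pcount x)) = u by omega] at hi
    have huJ' : u < J := by
      refine huJ.lt_of_ne fun hu => hi ?_
      rw [Finset.eq_univ_of_card (topM x u) (by rw [card_topM, Fintype.card_fin]; omega)]
      exact Finset.mem_univ i
    obtain ⟨j, hjT, hjA⟩ := Finset.exists_mem_notMem_of_card_le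
      (by rw [card_topM]; omega) hiA hi
    have hj' := orderStat_le_of_mem_topM x (by omega) huJ hjT
    have hi' := le_orderStat_succ_of_notMem_topM x huJ' hi
    exact .inr ⟨j, Finset.mem_compl.2 hjA, i, hiA, by linarith [hgap.resolve_left huJ'.ne]⟩

end StoppingRule

open scoped ENNReal

section ChangeOfMeasure

variable {Ω : Type*} {mΩ : MeasurableSpace Ω}

theorem one_le_ofReal_exp_neg_mul {t : ℝ} (ht : 0 < t) {F : ℝ≥0∞}
    (h : t ≤ Real.log F.toReal) : 1 ≤ ENNReal.ofReal (Real.exp (-t)) * F := by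
  have hF : 0 < F.toReal := by
    by_contra! h0
    rw [le_antisymm h0 ENNReal.toReal_nonneg, Real.log_zero] at h
    linarith
  have hexp : Real.exp t ≤ F.toReal := by simpa [Real.exp_log hF] using Real.exp_le_exp.2 h
  calc (1 : ℝ≥0∞) = ENNReal.ofReal (Real.exp (-t) * Real.exp t) := by
        rw [← Real.exp_add, neg_add_cancel, Real.exp_zero, ENNReal.ofReal_one]
    _ ≤ ENNReal.ofReal (Real.exp (-t) * F.toReal) := by gcongr
    _ = ENNReal.ofReal (Real.exp (-t)) * F := by
        rw [ENNReal.ofReal_mul (Real.exp_pos _).le,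
          ENNReal.ofReal_toReal (ENNReal.toReal_pos_iff.1 hF).2.ne]

/-- Split `{∃ n, t ≤ X n}` according to the first time `n` at which the level `t` is reached:
that event lies in `ℱ n`, and on it `f n ≥ exp t`, so there `μ ≤ exp (-t) • ν`. -/
theorem measure_exists_le_of_forall_density {ℱ : Filtration ℕ mΩ} {μ ν : Measure Ω}
    [IsProbabilityMeasure ν] {X : ℕ → Ω → ℝ} {f : ℕ → Ω → ℝ≥0∞} (hX : Adapted ℱ X)
    (hXf : ∀ n, ∀ᵐ x ∂μ, X n x = Real.log (f n x).toReal)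
    (hν : ∀ n s, MeasurableSet[ℱ n] s → ν s = ∫⁻ x in s, f n x ∂μ) {t : ℝ} (ht : 0 < t) :
    μ {x | ∃ n, t ≤ X n x} ≤ ENNReal.ofReal (Real.exp (-t)) := by
  set B : ℕ → Set Ω := fun n => {x | t ≤ X n x}
  have hB : ∀ n, MeasurableSet[ℱ n] (B n) := fun n => measurableSet_le measurable_const (hX n)
  have hD : ∀ n, MeasurableSet[ℱ n] (disjointed B n) := fun n => by
    rw [disjointed_eq_inter_compl]
    exact (hB n).inter (.iInter fun k => .iInter fun hk => (ℱ.mono hk.le _ (hB k)).compl)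
  have hfirst : ∀ n, μ (disjointed B n) ≤
      ENNReal.ofReal (Real.exp (-t)) * ν (disjointed B n) := fun n => by
    calc μ (disjointed B n) = ∫⁻ _ in disjointed B n, 1 ∂μ := (setLIntegral_one _).symm
      _ ≤ ∫⁻ x in disjointed B n, ENNReal.ofReal (Real.exp (-t)) * f n x ∂μ := by
        refine lintegral_mono_ae ((ae_restrict_iff' (ℱ.le n _ (hD n))).2 ?_)
        filter_upwards [hXf n] with x hx hxD
        exact one_le_ofReal_exp_neg_mul ht (hx ▸ disjointed_subset B n hxD)
      _ = ENNReal.ofReal (Real.exp (-t)) * ν (disjointed B n) := by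
        rw [lintegral_const_mul' _ _ ENNReal.ofReal_ne_top, hν n _ (hD n)]
  calc μ {x | ∃ n, t ≤ X n x} = μ (⋃ n, disjointed B n) := by
        rw [iUnion_disjointed, Set.ofPred_exists]
    _ ≤ ∑' n, μ (disjointed B n) := measure_iUnion_le _
    _ ≤ ∑' n, ENNReal.ofReal (Real.exp (-t)) * ν (disjointed B n) := ENNReal.tsum_le_tsum hfirst
    _ = ENNReal.ofReal (Real.exp (-t)) * ν (⋃ n, disjointed B n) := by
        rw [ENNReal.tsum_mul_left, measure_iUnion (disjoint_disjointed B) fun n => ℱ.le n _ (hD n)]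
    _ ≤ ENNReal.ofReal (Real.exp (-t)) := mul_le_of_le_one_right' prob_le_one

theorem measure_eq_setLIntegral_comp {β : Type*} {mβ : MeasurableSpace β} {μ ν : Measure Ω}
    {π : Ω → β} (hπ : Measurable π) {g : β → ℝ≥0∞} (hg : Measurable g)
    (h : ν.map π = (μ.map π).withDensity g) {s : Set Ω} (hs : MeasurableSet[mβ.comap π] s) :
    ν s = ∫⁻ x in s, g (π x) ∂μ := by
  obtain ⟨C, hC, rfl⟩ := hs
  rw [← Measure.map_apply hπ hC, h, withDensity_apply _ hC, setLIntegral_map hC hg hπ]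

def MeasureTheory.Filtration.prod {ι Ω' : Type*} [Preorder ι] {mΩ' : MeasurableSpace Ω'}
    (ℱ : Filtration ι mΩ) (𝒢 : Filtration ι mΩ') : Filtration ι (mΩ.prod mΩ') where
  seq i := (ℱ i).prod (𝒢 i)
  mono' _ _ hij := sup_le_sup (MeasurableSpace.comap_mono (ℱ.mono hij))
    (MeasurableSpace.comap_mono (𝒢.mono hij))
  le' i := sup_le_sup (MeasurableSpace.comap_mono (ℱ.le i)) (MeasurableSpace.comap_mono (𝒢.le i))

end ChangeOfMeasure

section Streams

variable {E : Type*} [MeasurableSpace E]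

def truncate (n : ℕ) (x : ℕ → E) : Fin n → E := fun i => x i

theorem measurable_truncate (n : ℕ) : Measurable (truncate (E := E) n) :=
  measurable_pi_lambda _ fun _ => measurable_pi_apply _

def truncFiltration : Filtration ℕ (MeasurableSpace.pi : MeasurableSpace (ℕ → E)) where
  seq n := MeasurableSpace.comap (truncate n) inferInstance
  mono' m n hmn := by
    change (MeasurableSpace.pi).comap (truncate m) ≤ (MeasurableSpace.pi).comap (truncate n)
    have hfac : truncate (E := E) m =
        (fun z : Fin n → E => fun i : Fin m => z (Fin.castLE hmn i)) ∘ truncate n := rfl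
    rw [hfac, ← MeasurableSpace.comap_comp]
    exact MeasurableSpace.comap_mono
      (measurable_pi_lambda _ fun _ => measurable_pi_apply _).comap_le
  le' n := (measurable_truncate n).comap_le

variable (P0 P1 : Measure (ℕ → E))

theorem adapted_llr : Adapted truncFiltration fun n => llr P0 P1 n := fun n =>
  (Real.measurable_log.comp (Measure.measurable_rnDeriv _ _).ennreal_toReal).comp
    (comap_measurable (truncate n))

theorem measure_exists_le_llr_le [IsProbabilityMeasure P0] [IsProbabilityMeasure P1]
    (habs : ∀ n, P1.map (truncate n) ≪ P0.map (truncate n)) {t : ℝ} (ht : 0 < t) :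
    P0 {x | ∃ n, t ≤ llr P0 P1 n x} ≤ ENNReal.ofReal (Real.exp (-t)) :=
  measure_exists_le_of_forall_density (adapted_llr P0 P1)
    (f := fun n x => (P1.map (truncate n)).rnDeriv (P0.map (truncate n)) (truncate n x))
    (fun _ => ae_of_all _ fun _ => rfl)
    (fun n _ hs => measure_eq_setLIntegral_comp (measurable_truncate n)
      (Measure.measurable_rnDeriv _ _) (Measure.withDensity_rnDeriv_eq _ _ (habs n)).symm hs) ht

theorem llr_swap_ae_eq [IsFiniteMeasure P0] [IsFiniteMeasure P1] {n : ℕ}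
    (habs : P1.map (truncate n) ≪ P0.map (truncate n)) :
    ∀ᵐ x ∂P1, llr P1 P0 n x = -llr P0 P1 n x := by
  filter_upwards [ae_of_ae_map (measurable_truncate n).aemeasurable (Measure.inv_rnDeriv habs)]
    with x hx
  rw [_root_.llr, _root_.llr, ← Real.log_inv, ← ENNReal.toReal_inv]
  exact congrArg (fun F => Real.log (ENNReal.toReal F)) hx.symm

theorem measure_exists_llr_le_le [IsProbabilityMeasure P0] [IsProbabilityMeasure P1]
    (habs : ∀ n, P1.map (truncate n) ≪ P0.map (truncate n))
    (habs' : ∀ n, P0.map (truncate n) ≪ P1.map (truncate n)) {t : ℝ} (ht : 0 < t) :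
    P1 {x | ∃ n, llr P0 P1 n x ≤ -t} ≤ ENNReal.ofReal (Real.exp (-t)) := by
  refine (measure_mono_ae ?_).trans (measure_exists_le_llr_le P1 P0 habs' ht)
  filter_upwards [ae_all_iff.2 fun n => llr_swap_ae_eq P0 P1 (habs n)] with x hx ⟨n, hn⟩
  exact ⟨n, by linarith [hx n]⟩

variable {E' : Type*} [MeasurableSpace E'] (Q0 Q1 : Measure (ℕ → E'))

theorem ae_rnDeriv_map_truncate_ne_zero_ne_top [IsFiniteMeasure P0] [IsFiniteMeasure P1] {n : ℕ}
    (habs : P0.map (truncate n) ≪ P1.map (truncate n)) :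
    ∀ᵐ x ∂P0, (P1.map (truncate n)).rnDeriv (P0.map (truncate n)) (truncate n x) ≠ 0 ∧
      (P1.map (truncate n)).rnDeriv (P0.map (truncate n)) (truncate n x) ≠ ⊤ := by
  have htr := (measurable_truncate (E := E) n).aemeasurable (μ := P0)
  filter_upwards [ae_of_ae_map htr (Measure.rnDeriv_pos' habs),
    ae_of_ae_map htr (Measure.rnDeriv_lt_top (P1.map (truncate n)) _)] with x hpos hlt
  exact ⟨hpos.ne', hlt.ne⟩

theorem prod_measure_exists_le_llr_add_llr_le [IsProbabilityMeasure P0] [IsProbabilityMeasure P1]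
    [IsProbabilityMeasure Q0] [IsProbabilityMeasure Q1]
    (hP : ∀ n, P1.map (truncate n) ≪ P0.map (truncate n))
    (hP' : ∀ n, P0.map (truncate n) ≪ P1.map (truncate n))
    (hQ : ∀ n, Q1.map (truncate n) ≪ Q0.map (truncate n))
    (hQ' : ∀ n, Q0.map (truncate n) ≪ Q1.map (truncate n)) {t : ℝ} (ht : 0 < t) :
    (P0.prod Q0) {z | ∃ n, t ≤ llr P0 P1 n z.1 + llr Q0 Q1 n z.2} ≤
      ENNReal.ofReal (Real.exp (-t)) := by
  set g : ∀ n, (Fin n → E) × (Fin n → E') → ℝ≥0∞ := fun n w =>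
    (P1.map (truncate n)).rnDeriv (P0.map (truncate n)) w.1 *
      (Q1.map (truncate n)).rnDeriv (Q0.map (truncate n)) w.2
  refine measure_exists_le_of_forall_density (ℱ := truncFiltration.prod truncFiltration)
    (ν := P1.prod Q1) (f := fun n z => g n (Prod.map (truncate n) (truncate n) z))
    (fun n => ((adapted_llr P0 P1 n).comp measurable_fst).add
      ((adapted_llr Q0 Q1 n).comp measurable_snd)) (fun n => ?_) (fun n s hs => ?_) ht
  · filter_upwards
      [Measure.quasiMeasurePreserving_fst.ae (ae_rnDeriv_map_truncate_ne_zero_ne_top P0 P1 (hP' n)),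
      Measure.quasiMeasurePreserving_snd.ae (ae_rnDeriv_map_truncate_ne_zero_ne_top Q0 Q1 (hQ' n))]
      with z hz1 hz2
    simp only [g, Prod.map_fst, Prod.map_snd, Pi.add_apply, Function.comp_apply]
    rw [ENNReal.toReal_mul, Real.log_mul (ENNReal.toReal_ne_zero.2 hz1)
      (ENNReal.toReal_ne_zero.2 hz2)]
    rfl
  · have hmap : (P1.prod Q1).map (Prod.map (truncate n) (truncate n)) =
        ((P0.prod Q0).map (Prod.map (truncate n) (truncate n))).withDensity (g n) := by
      rw [← Measure.map_prod_map _ _ (measurable_truncate n) (measurable_truncate n),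
        ← Measure.map_prod_map _ _ (measurable_truncate n) (measurable_truncate n),
        ← prod_withDensity (Measure.measurable_rnDeriv _ _) (Measure.measurable_rnDeriv _ _),
        Measure.withDensity_rnDeriv_eq _ _ (hP n), Measure.withDensity_rnDeriv_eq _ _ (hQ n)]
    refine measure_eq_setLIntegral_comp ((measurable_truncate n).prodMap (measurable_truncate n))
      ((Measure.measurable_rnDeriv _ _).comp measurable_fst |>.mul
        ((Measure.measurable_rnDeriv _ _).comp measurable_snd)) hmap ?_
    exact (congrArg (MeasurableSet[·] s) (MeasurableSpace.comap_prodMap _ _)).mpr hs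

theorem prod_measure_exists_le_llr_sub_llr_le [IsProbabilityMeasure P0] [IsProbabilityMeasure P1]
    [IsProbabilityMeasure Q0] [IsProbabilityMeasure Q1]
    (hP : ∀ n, P1.map (truncate n) ≪ P0.map (truncate n))
    (hP' : ∀ n, P0.map (truncate n) ≪ P1.map (truncate n))
    (hQ : ∀ n, Q1.map (truncate n) ≪ Q0.map (truncate n))
    (hQ' : ∀ n, Q0.map (truncate n) ≪ Q1.map (truncate n)) {t : ℝ} (ht : 0 < t) :
    (P0.prod Q1) {z | ∃ n, t ≤ llr P0 P1 n z.1 - llr Q0 Q1 n z.2} ≤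
      ENNReal.ofReal (Real.exp (-t)) := by
  refine (measure_mono_ae ?_).trans
    (prod_measure_exists_le_llr_add_llr_le P0 P1 Q1 Q0 hP hP' hQ' hQ ht)
  filter_upwards [Measure.quasiMeasurePreserving_snd.ae
    (ae_all_iff.2 fun n => llr_swap_ae_eq Q0 Q1 (hQ n))] with z hz ⟨n, hn⟩
  exact ⟨n, by linarith [hz n]⟩

end Streams

theorem integral_div_max_le_measureReal {Ω : Type*} [MeasurableSpace Ω] {μ : Measure Ω}
    [IsFiniteMeasure μ] {k m : Ω → ℕ} {U : Set Ω} (hkm : ∀ ω, k ω ≤ m ω)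
    (hU : ∀ᵐ ω ∂μ, k ω ≠ 0 → ω ∈ U) :
    ∫ ω, (k ω : ℝ) / (max (m ω) 1 : ℕ) ∂μ ≤ μ.real U := by
  have hle : ∀ᵐ ω ∂μ, (k ω : ℝ) / (max (m ω) 1 : ℕ) ≤ (toMeasurable μ U).indicator 1 ω := by
    filter_upwards [hU] with ω hω
    rcases Nat.eq_zero_or_pos (k ω) with h0 | hpos
    · simp [h0, Set.indicator_nonneg]
    · rw [Set.indicator_of_mem (subset_toMeasurable μ U (hω hpos.ne')), Pi.one_apply,
        div_le_one (by positivity)]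
      exact_mod_cast (hkm ω).trans (le_max_left _ _)
  calc _ ≤ ∫ ω, (toMeasurable μ U).indicator 1 ω ∂μ :=
        integral_mono_of_nonneg (ae_of_all _ fun ω => by positivity)
          ((integrable_const 1).indicator (measurableSet_toMeasurable μ U)) hle
    _ = μ.real U := by
        rw [integral_indicator_one (measurableSet_toMeasurable μ U), measureReal_def,
          measure_toMeasurable, measureReal_def]

theorem measure_setOf_exists_mem_le {Ω ι : Type*} [MeasurableSpace Ω] {μ : Measure Ω}
    {s : Finset ι} {p : ι → Ω → Prop} {r : ℝ}
    (hp : ∀ i ∈ s, μ {ω | p i ω} ≤ ENNReal.ofReal r) :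
    μ {ω | ∃ i ∈ s, p i ω} ≤ ENNReal.ofReal (s.card * r) := by
  rw [show {ω | ∃ i ∈ s, p i ω} = ⋃ i ∈ s, {ω | p i ω} by ext; simp]
  refine (measure_biUnion_finset_le _ _).trans ((Finset.sum_le_sum hp).trans_eq ?_)
  rw [Finset.sum_const, ← ENNReal.ofReal_nsmul, nsmul_eq_mul]

theorem measure_setOf_or_le {Ω ι : Type*} [MeasurableSpace Ω] {μ : Measure Ω}
    {s₁ s₂ s₃ : Finset ι} {p : ι → Ω → Prop} {q : ι → ι → Ω → Prop} {r₁ r₂ : ℝ}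
    (hr₁ : 0 ≤ r₁) (hr₂ : 0 ≤ r₂) (hp : ∀ i ∈ s₁, μ {ω | p i ω} ≤ ENNReal.ofReal r₁)
    (hq : ∀ j ∈ s₂, ∀ i ∈ s₃, μ {ω | q j i ω} ≤ ENNReal.ofReal r₂) :
    μ {ω | (∃ i ∈ s₁, p i ω) ∨ ∃ j ∈ s₂, ∃ i ∈ s₃, q j i ω} ≤
      ENNReal.ofReal (s₁.card * r₁ + s₂.card * s₃.card * r₂) := by
  rw [Set.ofPred_or, ENNReal.ofReal_add (by positivity) (by positivity), mul_assoc]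
  exact (measure_union_le _ _).trans (add_le_add (measure_setOf_exists_mem_le hp)
    (measure_setOf_exists_mem_le fun j hj => measure_setOf_exists_mem_le (hq j hj)))

theorem exists_giCond_of_tendsto {J : ℕ} {lam : Fin J → ℕ → ℝ} {A : Finset (Fin J)} {l u : ℕ}
    {a b c d : ℝ} (hA : ∀ j ∈ A, Tendsto (lam j) atTop atTop)
    (hAc : ∀ j ∉ A, Tendsto (lam j) atTop atBot) (hAl : l ≤ A.card) (hAu : A.card ≤ u) :
    ∃ n, 1 ≤ n ∧ giCond (fun j => lam j n) l u a b c d := by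
  -- `max b 1` and `min (-a) 0` let the signs of the statistics single out `A`.
  have hev : ∀ᶠ n in atTop,
      ∀ j, (j ∈ A ∧ max b 1 ≤ lam j n) ∨ (j ∉ A ∧ lam j n ≤ min (-a) 0) := by
    refine eventually_all.2 fun j => ?_
    by_cases hj : j ∈ A
    · exact ((hA j hj).eventually_ge_atTop _).mono fun n hn => .inl ⟨hj, hn⟩
    · exact ((hAc j hj).eventually_le_atBot _).mono fun n hn => .inr ⟨hj, hn⟩
  obtain ⟨n, hn, h1⟩ := (hev.and (eventually_ge_atTop 1)).exists
  have hpos : pcount (fun j => lam j n) = A.card := by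
    rw [pcount]
    congr 1
    ext j
    rcases hn j with ⟨hj, h⟩ | ⟨hj, h⟩
    · simpa [hj] using zero_lt_one.trans_le ((le_max_right b 1).trans h)
    · simpa [hj] using h.trans (min_le_right _ _)
  refine ⟨n, h1, .inr (.inl ⟨hpos ▸ hAl, hpos ▸ hAu, fun j hj => ?_⟩)⟩
  rcases hn j with ⟨-, h⟩ | ⟨-, h⟩
  · exact (max_le_iff.1 h).1.not_gt hj.2
  · exact (le_min_iff.1 h).1.not_gt hj.1

section SignalModel

variable {J : ℕ} {E : Fin J → Type*} [∀ j, MeasurableSpace (E j)]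
  {P0 P1 : ∀ j, Measure (ℕ → E j)} {A : Finset (Fin J)} {PA : Measure (∀ j, ℕ → E j)}

theorem ae_exists_giCond (hlaw : ∀ j, PA.map (fun ω => ω j) = if j ∈ A then P1 j else P0 j)
    (hnull : ∀ j, ∀ᵐ x ∂(P0 j), Tendsto (fun n => llr (P0 j) (P1 j) n x) atTop atBot)
    (halt : ∀ j, ∀ᵐ x ∂(P1 j), Tendsto (fun n => llr (P0 j) (P1 j) n x) atTop atTop)
    {l u : ℕ} {a b c d : ℝ} (hAl : l ≤ A.card) (hAu : A.card ≤ u) :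
    ∀ᵐ ω ∂PA, ∃ n, 1 ≤ n ∧ giCond (fun j => llr (P0 j) (P1 j) n (ω j)) l u a b c d := by
  have hlim : ∀ j, ∀ᵐ ω ∂PA,
      (j ∈ A → Tendsto (fun n => llr (P0 j) (P1 j) n (ω j)) atTop atTop) ∧
      (j ∉ A → Tendsto (fun n => llr (P0 j) (P1 j) n (ω j)) atTop atBot) := fun j => by
    have hj : ∀ᵐ x ∂PA.map (fun ω => ω j),
        (j ∈ A → Tendsto (fun n => llr (P0 j) (P1 j) n x) atTop atTop) ∧
        (j ∉ A → Tendsto (fun n => llr (P0 j) (P1 j) n x) atTop atBot) := by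
      rw [hlaw j]
      split_ifs with hjA
      exacts [(halt j).mono fun x hx => ⟨fun _ => hx, absurd hjA⟩,
        (hnull j).mono fun x hx => ⟨(absurd · hjA), fun _ => hx⟩]
    exact ae_of_ae_map (measurable_pi_apply j).aemeasurable hj
  filter_upwards [ae_all_iff.2 hlim] with ω hω
  exact exists_giCond_of_tendsto (fun j hj => (hω j).1 hj) (fun j hj => (hω j).2 hj) hAl hAu

variable [∀ j, IsProbabilityMeasure (P0 j)] [∀ j, IsProbabilityMeasure (P1 j)]

theorem measure_exists_le_llr_of_notMem
    (hlaw : ∀ j, PA.map (fun ω => ω j) = if j ∈ A then P1 j else P0 j) {j : Fin J}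
    (habs : ∀ n, (P1 j).map (truncate n) ≪ (P0 j).map (truncate n)) (hj : j ∉ A) {t : ℝ}
    (ht : 0 < t) :
    PA {ω | ∃ n, t ≤ llr (P0 j) (P1 j) n (ω j)} ≤ ENNReal.ofReal (Real.exp (-t)) := by
  calc _ ≤ PA.map (fun ω => ω j) {x | ∃ n, t ≤ llr (P0 j) (P1 j) n x} :=
        Measure.le_map_apply (measurable_pi_apply j).aemeasurable _
    _ ≤ _ := by
        rw [hlaw j, if_neg hj]
        exact measure_exists_le_llr_le _ _ habs ht

theorem measure_exists_llr_le_of_mem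
    (hlaw : ∀ j, PA.map (fun ω => ω j) = if j ∈ A then P1 j else P0 j) {i : Fin J}
    (habs : ∀ n, (P1 i).map (truncate n) ≪ (P0 i).map (truncate n) ∧
      (P0 i).map (truncate n) ≪ (P1 i).map (truncate n)) (hi : i ∈ A) {t : ℝ} (ht : 0 < t) :
    PA {ω | ∃ n, llr (P0 i) (P1 i) n (ω i) ≤ -t} ≤ ENNReal.ofReal (Real.exp (-t)) := by
  calc _ ≤ PA.map (fun ω => ω i) {x | ∃ n, llr (P0 i) (P1 i) n x ≤ -t} :=
        Measure.le_map_apply (measurable_pi_apply i).aemeasurable _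
    _ ≤ _ := by
        rw [hlaw i, if_pos hi]
        exact measure_exists_llr_le_le _ _ (habs · |>.1) (habs · |>.2) ht

variable [IsProbabilityMeasure PA]

theorem measure_exists_le_llr_sub_llr (hind : iIndepFun (fun j ω => ω j) PA)
    (hlaw : ∀ j, PA.map (fun ω => ω j) = if j ∈ A then P1 j else P0 j)
    (habs : ∀ j n, (P1 j).map (truncate n) ≪ (P0 j).map (truncate n) ∧
      (P0 j).map (truncate n) ≪ (P1 j).map (truncate n)) {i j : Fin J} (hj : j ∉ A) (hi : i ∈ A)
    {t : ℝ} (ht : 0 < t) :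
    PA {ω | ∃ n, t ≤ llr (P0 j) (P1 j) n (ω j) - llr (P0 i) (P1 i) n (ω i)} ≤
      ENNReal.ofReal (Real.exp (-t)) := by
  have hπ : ∀ k, Measurable fun ω : (∀ j, ℕ → E j) => ω k := measurable_pi_apply
  have hmap : PA.map (fun ω => (ω j, ω i)) = (P0 j).prod (P1 i) := by
    rw [(indepFun_iff_map_prod_eq_prod_map_map (hπ j).aemeasurable (hπ i).aemeasurable).1
      (hind.indepFun fun hji => hj (hji ▸ hi)), hlaw, hlaw, if_neg hj, if_pos hi]
  calc _ ≤ PA.map (fun ω => (ω j, ω i))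
        {z | ∃ n, t ≤ llr (P0 j) (P1 j) n z.1 - llr (P0 i) (P1 i) n z.2} :=
        Measure.le_map_apply ((hπ j).prodMk (hπ i)).aemeasurable _
    _ ≤ _ := hmap ▸ prod_measure_exists_le_llr_sub_llr_le _ _ _ _ (habs j · |>.1)
        (habs j · |>.2) (habs i · |>.1) (habs i · |>.2) ht

theorem integral_fdp_giD_le (hind : iIndepFun (fun j ω => ω j) PA)
    (hlaw : ∀ j, PA.map (fun ω => ω j) = if j ∈ A then P1 j else P0 j)
    (habs : ∀ j n, (P1 j).map (truncate n) ≪ (P0 j).map (truncate n) ∧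
      (P0 j).map (truncate n) ≪ (P1 j).map (truncate n))
    {l u : ℕ} {a b c d : ℝ} (ha : 0 ≤ a) (hb : 0 < b) (hc : 0 < c) (hlu : l < u) (huJ : u ≤ J)
    (hAl : l ≤ A.card)
    (hstop : ∀ᵐ ω ∂PA, ∃ n, 1 ≤ n ∧ giCond (fun j => llr (P0 j) (P1 j) n (ω j)) l u a b c d) :
    ∫ ω, ((giD (fun j n => llr (P0 j) (P1 j) n (ω j)) l u a b c d \ A).card : ℝ)
        / ((max (giR (fun j n => llr (P0 j) (P1 j) n (ω j)) l u a b c d) 1 : ℕ) : ℝ) ∂PA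
      ≤ Aᶜ.card * Real.exp (-b) + Aᶜ.card * A.card * Real.exp (-c) := by
  have hbad := measure_setOf_or_le (μ := PA) (s₁ := Aᶜ) (s₂ := Aᶜ) (s₃ := A)
    (Real.exp_pos (-b)).le (Real.exp_pos (-c)).le
    (fun j hj => measure_exists_le_llr_of_notMem hlaw (habs j · |>.1) (Finset.mem_compl.1 hj) hb)
    (fun j hj i hi => measure_exists_le_llr_sub_llr hind hlaw habs (Finset.mem_compl.1 hj) hi hc)
  refine (integral_div_max_le_measureReal (fun ω => ?_) (hstop.mono fun ω hω hk => ?_)).trans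
    (ENNReal.toReal_le_of_le_ofReal (by positivity) hbad)
  · exact (Finset.card_le_card Finset.sdiff_subset).trans
      ((card_topM _ _).trans_le (min_le_left _ _))
  · obtain ⟨j, hj⟩ := Finset.card_ne_zero.1 hk
    rcases exists_of_mem_topM_of_giCond _ (Nat.sInf_mem hω).2 ha hb hlu huJ hAl
      (Finset.mem_sdiff.1 hj).1 (Finset.mem_compl.2 (Finset.mem_sdiff.1 hj).2) with
      ⟨j, hjA, h⟩ | ⟨j, hjA, i, hiA, h⟩
    exacts [.inl ⟨j, hjA, _, h⟩, .inr ⟨j, hjA, i, hiA, _, h⟩]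

theorem integral_fnp_giD_le (hind : iIndepFun (fun j ω => ω j) PA)
    (hlaw : ∀ j, PA.map (fun ω => ω j) = if j ∈ A then P1 j else P0 j)
    (habs : ∀ j n, (P1 j).map (truncate n) ≪ (P0 j).map (truncate n) ∧
      (P0 j).map (truncate n) ≪ (P1 j).map (truncate n))
    {l u : ℕ} {a b c d : ℝ} (ha : 0 < a) (hb : 0 < b) (hd : 0 < d) (hlu : l < u) (huJ : u ≤ J)
    (hAu : A.card ≤ u)
    (hstop : ∀ᵐ ω ∂PA, ∃ n, 1 ≤ n ∧ giCond (fun j => llr (P0 j) (P1 j) n (ω j)) l u a b c d) :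
    ∫ ω, ((A \ giD (fun j n => llr (P0 j) (P1 j) n (ω j)) l u a b c d).card : ℝ)
        / ((max (J - giR (fun j n => llr (P0 j) (P1 j) n (ω j)) l u a b c d) 1 : ℕ) : ℝ) ∂PA
      ≤ A.card * Real.exp (-a) + Aᶜ.card * A.card * Real.exp (-d) := by
  have hbad := measure_setOf_or_le (μ := PA) (s₁ := A) (s₂ := Aᶜ) (s₃ := A)
    (Real.exp_pos (-a)).le (Real.exp_pos (-d)).le
    (fun i hi => measure_exists_llr_le_of_mem hlaw (habs i) hi ha)
    (fun j hj i hi => measure_exists_le_llr_sub_llr hind hlaw habs (Finset.mem_compl.1 hj) hi hd)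
  refine (integral_div_max_le_measureReal (fun ω => ?_) (hstop.mono fun ω hω hk => ?_)).trans
    (ENNReal.toReal_le_of_le_ofReal (by positivity) hbad)
  · set D := giD (fun j n => llr (P0 j) (P1 j) n (ω j)) l u a b c d
    have hD : D.card = min (giR (fun j n => llr (P0 j) (P1 j) n (ω j)) l u a b c d) J :=
      card_topM _ _
    have hAD : (A \ D).card ≤ Dᶜ.card :=
      Finset.card_le_card fun i hi => Finset.mem_compl.2 (Finset.mem_sdiff.1 hi).2
    rw [Finset.card_compl, Fintype.card_fin] at hAD
    omega
  · obtain ⟨i, hi⟩ := Finset.card_ne_zero.1 hk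
    rcases exists_of_notMem_topM_of_giCond _ (Nat.sInf_mem hω).2 ha.le hb hlu huJ hAu
      (Finset.mem_sdiff.1 hi).2 (Finset.mem_sdiff.1 hi).1 with
      ⟨i, hiA, h⟩ | ⟨j, hjA, i, hiA, h⟩
    exacts [.inl ⟨i, hiA, _, h⟩, .inr ⟨j, hjA, i, hiA, _, h⟩]

end SignalModel

theorem exp_neg_abs_log_add_log {γ r : ℝ} (hγ : γ ∈ Set.Ioo (0 : ℝ) 1) (hr : 0 < r) :
    Real.exp (-(|Real.log γ| + Real.log r)) = γ / r := by
  rw [abs_of_neg (Real.log_neg hγ.1 hγ.2), show -(-Real.log γ + Real.log r) =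
    Real.log γ - Real.log r by ring, Real.exp_sub, Real.exp_log hγ.1, Real.exp_log hr]

theorem fdr_threshold_sum_le {J l s α : ℝ} (hl : 0 ≤ l) (hls : l ≤ s) (hlJ : l < J)
    (hα : 0 ≤ α) : (J - s) * (α / J) + (J - s) * s * (α / ((J - l) * J)) ≤ α := by
  have hJl : 0 < J - l := by linarith
  have hJ : 0 < J := by linarith
  have hslack : 0 ≤ α * (s * (s - l)) / ((J - l) * J) :=
    div_nonneg (mul_nonneg hα (mul_nonneg (by linarith) (by linarith))) (by positivity)
  have hsum : (J - s) * (α / J) + (J - s) * s * (α / ((J - l) * J)) =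
      α - α * (s * (s - l)) / ((J - l) * J) := by
    field_simp
    ring
  linarith

theorem fnr_threshold_sum_le {J u s β : ℝ} (hs : 0 ≤ s) (hsu : s ≤ u) (hsJ : s ≤ J)
    (hβ : 0 ≤ β) : s * (β / J) + (J - s) * s * (β / (u * J)) ≤ β := by
  rcases hs.eq_or_lt with rfl | hs
  · simpa using hβ
  have hu : 0 < u := by linarith
  have hJ : 0 < J := by linarith
  have hslack : 0 ≤ β * ((u - s) * (J - s)) / (u * J) :=
    div_nonneg (mul_nonneg hβ (mul_nonneg (by linarith) (by linarith))) (by positivity)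
  have hsum : s * (β / J) + (J - s) * s * (β / (u * J)) =
      β - β * ((u - s) * (J - s)) / (u * J) := by
    field_simp
    ring
  linarith

/-- Admissibility of the gap-intersection rule for FDR/FNR control when the number of
signals is known to lie in `[ℓ, u]`: with thresholds `a = |log β| + log J`,
`b = |log α| + log J`, `c = |log α| + log((J − ℓ)J)`, `d = |log β| + log(uJ)`, under any
signal set `A` with `ℓ ≤ |A| ≤ u` the rule terminates `P_A`-a.s. and satisfies
`FDR_A ≤ α` and `FNR_A ≤ β`, where `FDR_A = E_A[V/max(R,1)]`, `FNR_A = E_A[W/max(J−R,1)]`,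
`V = |D \ A|`, `W = |A \ D|`, `R = |D| = p′`. -/
theorem stmt16 (J : ℕ) (hJ : 2 ≤ J) (E : Fin J → Type*) [∀ j, MeasurableSpace (E j)]
    (P0 P1 : ∀ j, Measure (ℕ → E j))
    [∀ j, IsProbabilityMeasure (P0 j)] [∀ j, IsProbabilityMeasure (P1 j)]
    (habs : ∀ (j : Fin J) (n : ℕ),
      (P1 j).map (fun y (i : Fin n) => y i) ≪ (P0 j).map (fun y (i : Fin n) => y i) ∧
      (P0 j).map (fun y (i : Fin n) => y i) ≪ (P1 j).map (fun y (i : Fin n) => y i))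
    (hnull : ∀ j, ∀ᵐ x ∂(P0 j), Tendsto (fun n => llr (P0 j) (P1 j) n x) atTop atBot)
    (halt : ∀ j, ∀ᵐ x ∂(P1 j), Tendsto (fun n => llr (P0 j) (P1 j) n x) atTop atTop)
    (l u : ℕ) (hlu : l < u) (huJ : u ≤ J)
    (α β : ℝ) (hα : α ∈ Set.Ioo (0 : ℝ) 1) (hβ : β ∈ Set.Ioo (0 : ℝ) 1)
    (a b c d : ℝ)
    (ha : a = |Real.log β| + Real.log (J : ℝ))
    (hb : b = |Real.log α| + Real.log (J : ℝ))
    (hc : c = |Real.log α| + Real.log (((J - l) * J : ℕ) : ℝ))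
    (hd : d = |Real.log β| + Real.log ((u * J : ℕ) : ℝ))
    (A : Finset (Fin J)) (hAl : l ≤ A.card) (hAu : A.card ≤ u)
    (PA : Measure (∀ j, ℕ → E j)) [IsProbabilityMeasure PA]
    (hind : iIndepFun (fun j ω => ω j) PA)
    (hlaw : ∀ j, PA.map (fun ω => ω j) = if j ∈ A then P1 j else P0 j) :
    -- the gap-intersection rule terminates `P_A`-almost surely:
    (∀ᵐ ω ∂PA, ∃ n : ℕ, 1 ≤ n ∧
      giCond (fun j => llr (P0 j) (P1 j) n (ω j)) l u a b c d) ∧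
    -- FDR_A ≤ α:
    (∫ ω, ((giD (fun j n => llr (P0 j) (P1 j) n (ω j)) l u a b c d \ A).card : ℝ)
        / ((max (giR (fun j n => llr (P0 j) (P1 j) n (ω j)) l u a b c d) 1 : ℕ) : ℝ) ∂PA)
      ≤ α ∧
    -- FNR_A ≤ β:
    (∫ ω, ((A \ giD (fun j n => llr (P0 j) (P1 j) n (ω j)) l u a b c d).card : ℝ)
        / ((max (J - giR (fun j n => llr (P0 j) (P1 j) n (ω j)) l u a b c d) 1 : ℕ) : ℝ)
        ∂PA) ≤ β := by
  have hJ1 : (1 : ℝ) < J := by exact_mod_cast hJ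
  have hJl : (1 : ℝ) < ((J - l) * J : ℕ) := by
    exact_mod_cast lt_of_lt_of_le (by omega : 1 < J) (Nat.le_mul_of_pos_left J (by omega))
  have huJ1 : (1 : ℝ) < (u * J : ℕ) := by
    exact_mod_cast lt_of_lt_of_le (by omega : 1 < J) (Nat.le_mul_of_pos_left J (by omega))
  have hthreshold : ∀ {γ r : ℝ}, 1 < r → 0 < |Real.log γ| + Real.log r := fun hr =>
    add_pos_of_nonneg_of_pos (abs_nonneg _) (Real.log_pos hr)
  have hstop := ae_exists_giCond (PA := PA) (a := a) (b := b) (c := c) (d := d) hlaw hnull halt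
    hAl hAu
  have hcard : (Aᶜ.card : ℝ) = J - A.card := by
    rw [Finset.card_compl, Fintype.card_fin, Nat.cast_sub (hAu.trans huJ)]
  refine ⟨hstop, (integral_fdp_giD_le hind hlaw habs (ha ▸ hthreshold hJ1).le
    (hb ▸ hthreshold hJ1) (hc ▸ hthreshold hJl) hlu huJ hAl hstop).trans ?_,
    (integral_fnp_giD_le hind hlaw habs (ha ▸ hthreshold hJ1) (hb ▸ hthreshold hJ1)
      (hd ▸ hthreshold huJ1) hlu huJ hAu hstop).trans ?_⟩
  · rw [hcard, hb, hc, exp_neg_abs_log_add_log hα (by linarith),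
      exp_neg_abs_log_add_log hα (by linarith)]
    push_cast [Nat.cast_sub (hlu.trans_le huJ).le]
    exact fdr_threshold_sum_le (Nat.cast_nonneg _) (by exact_mod_cast hAl)
      (by exact_mod_cast hlu.trans_le huJ) hα.1.le
  · rw [hcard, ha, hd, exp_neg_abs_log_add_log hβ (by linarith),
      exp_neg_abs_log_add_log hβ (by linarith)]
    push_cast
    exact fnr_threshold_sum_le (Nat.cast_nonneg _) (by exact_mod_cast hAu)
      (by exact_mod_cast hAu.trans huJ) hβ.1.le
end
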